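/- arXiv:math/0504607 — 7 statements merged into one kernel-verified Lean document; each statement's English description precedes it below -/
import Mathlib

section
/- Every r-uniform hypergraph H = ([n], E) with multiplicities that is up-monotone and loop-free can be represented as a generalized Kneser hypergraph KG^r_{r-1}(S): setting S_i := {i} ∪ { ē ∈ Ē : i ∈ ē }, where Ē is the set of edges of K^r_n not in E, a multiset {{i_1,…,i_r}} is an edge of H if and only if S_{i_1} ∩ … ∩ S_{i_r} = ∅ and the multiset is (r-1)-disjoint with respect to the ground elements, i.e., it corresponds to an edge of KG^r_{r-1}({S_1,…,S_n}). -/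
/-- Every loop-free up-monotone `r`-uniform hypergraph with multiplicities
`H = ([n], E)` is represented as `KG^r_{r-1}(S)` by the sets
`Sᵢ = {i} ∪ {f ∈ Ē : i ∈ f}` (over the ground set `Fin n ⊕ Multiset (Fin n)`),
where `Ē` consists of the non-edges of `K^r_n`: for every `r`-multiset `e` with
at least two distinct elements, `e ∈ E` iff `S_{i₁} ∩ … ∩ S_{i_r} = ∅`,
i.e. iff `e` maps to an `(r-1)`-disjoint multiset of the `Sᵢ`
(no ground element lies in all `r` of them). -/
theorem stmt7 {n r : ℕ} (hr : 2 ≤ r) (E : Set (Multiset (Fin n)))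
    (hcard : ∀ e ∈ E, Multiset.card e = r)
    (hloop : ∀ e ∈ E, ∃ a ∈ e, ∃ b ∈ e, a ≠ b)
    (hup : ∀ e ∈ E, ∀ e' : Multiset (Fin n), Multiset.card e' = r →
      (∃ a ∈ e', ∃ b ∈ e', a ≠ b) → e.toFinset ⊆ e'.toFinset → e' ∈ E)
    (S : Fin n → Set (Fin n ⊕ Multiset (Fin n)))
    (hS : ∀ i, S i = insert (Sum.inl i)
      (Sum.inr '' {f | Multiset.card f = r ∧ (∃ a ∈ f, ∃ b ∈ f, a ≠ b) ∧
        f ∉ E ∧ i ∈ f})) :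
    ∀ e : Multiset (Fin n), Multiset.card e = r → (∃ a ∈ e, ∃ b ∈ e, a ≠ b) →
      (e ∈ E ↔ ∀ x : Fin n ⊕ Multiset (Fin n), ∃ i ∈ e, x ∉ S i) := by
  intro e hce hne
  constructor
  · intro heE x
    cases x with
    | inl j =>
      obtain ⟨a, ha, b, hb, hab⟩ := hne
      rcases eq_or_ne j a with rfl | hja
      · refine ⟨b, hb, ?_⟩
        rw [hS]
        simp only [Set.mem_insert_iff, Set.mem_image]
        rintro (h | ⟨f, _, h⟩)
        · exact hab (Sum.inl.inj h)
        · exact nomatch h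
      · refine ⟨a, ha, ?_⟩
        rw [hS]
        simp only [Set.mem_insert_iff, Set.mem_image]
        rintro (h | ⟨f, _, h⟩)
        · exact hja (Sum.inl.inj h)
        · exact nomatch h
    | inr f =>
      by_contra hcon
      push_neg at hcon
      have key : ∀ i ∈ e, Multiset.card f = r ∧ (∃ a ∈ f, ∃ b ∈ f, a ≠ b) ∧
          f ∉ E ∧ i ∈ f := by
        intro i hi
        have := hcon i hi
        rw [hS] at this
        simp only [Set.mem_insert_iff, Set.mem_image] at this
        rcases this with h | ⟨g, hg, hgf⟩
        · exact nomatch h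
        · exact (Sum.inr.injEq _ _ ▸ hgf) ▸ hg
      obtain ⟨a, ha, _⟩ := hne
      obtain ⟨hcf, hnef, hfE, _⟩ := key a ha
      refine hfE (hup e heE f hcf hnef ?_)
      intro i hi
      rw [Multiset.mem_toFinset] at *
      exact (key i hi).2.2.2
  · intro h
    by_contra heE
    obtain ⟨i, hi, hxi⟩ := h (Sum.inr e)
    apply hxi
    rw [hS]
    exact Set.mem_insert_iff.mpr (Or.inr ⟨e, ⟨hce, hne, heE, hi⟩, rfl⟩)
end

section
/- An r-uniform hypergraph with multiplicities H = ([n], E) can be represented as KG^r_{r-1}(S) for some set family S if and only if H is up-monotone. -/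
/-!
The Kneser condition on an `r`-multiset `e` only says that the sets `S i`, `i ∈ e`, have no common
point, which depends on the support of `e` alone and only becomes easier on larger supports; this
gives up-monotonicity. Conversely, call a set of vertices independent if it contains the support of
no edge, and let `S i` be the family of independent sets containing `i`. A multiset `e` then
satisfies the Kneser condition iff its support is independent, and by up-monotonicity this happens
iff `e` is not an edge. Singletons are independent because edges are not loops, so `i ↦ S i` is
injective with nonempty values.
-/

open Multiset Function

theorem Multiset.countP_le_card_sub_one_iff {α : Type*} {p : α → Prop} [DecidablePred p]
    {s : Multiset α} (hs : s ≠ 0) : s.countP p ≤ card s - 1 ↔ ∃ a ∈ s, ¬ p a := by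
  have hpos := card_pos.2 hs
  have hle := countP_le_card p s
  rw [← not_iff_not]
  push Not
  rw [← countP_eq_card]
  omega

section Kneser

variable {ι β : Type*}

def IsUpMonotone [DecidableEq ι] (r : ℕ) (E : Set (Multiset ι)) : Prop :=
  ∀ e ∈ E, ∀ e' : Multiset ι, card e' = r → (∃ a ∈ e', ∃ b ∈ e', a ≠ b) →
    e.toFinset ⊆ e'.toFinset → e' ∈ E

/-- `S` represents `E` as the Kneser hypergraph `KG^r_{r-1}(S)`. -/
def IsKneserRepr [DecidableEq β] (S : ι → Finset β) (r : ℕ) (E : Set (Multiset ι)) : Prop :=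
  Injective S ∧ (∀ i, (S i).Nonempty) ∧
    ∀ e : Multiset ι, card e = r → (e ∈ E ↔ ∀ x, e.countP (fun i => x ∈ S i) ≤ r - 1)

theorem kneser_condition_iff [DecidableEq β] {S : ι → Finset β} {r : ℕ} {e : Multiset ι}
    (hr : r ≠ 0) (he : card e = r) :
    (∀ x, e.countP (fun i => x ∈ S i) ≤ r - 1) ↔ ∀ x, ∃ i ∈ e, x ∉ S i := by
  subst he
  exact forall_congr' fun _ => countP_le_card_sub_one_iff (card_pos.1 (Nat.pos_of_ne_zero hr))

theorem IsKneserRepr.isUpMonotone [DecidableEq ι] [DecidableEq β] {S : ι → Finset β} {r : ℕ}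
    {E : Set (Multiset ι)} (hS : IsKneserRepr S r E) (hr : r ≠ 0)
    (hcard : ∀ e ∈ E, card e = r) : IsUpMonotone r E := by
  intro e he e' he' _ hsupp
  have hsep := (kneser_condition_iff hr (hcard e he)).1 ((hS.2.2 e (hcard e he)).1 he)
  refine (hS.2.2 e' he').2 ((kneser_condition_iff hr he').2 fun x => ?_)
  obtain ⟨i, hi, hx⟩ := hsep x
  exact ⟨i, mem_toFinset.1 (hsupp (mem_toFinset.2 hi)), hx⟩

theorem IsKneserRepr.map_equiv [DecidableEq β] {γ : Type*} [DecidableEq γ] {S : ι → Finset β}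
    {r : ℕ} {E : Set (Multiset ι)} (hS : IsKneserRepr S r E) (φ : β ≃ γ) :
    IsKneserRepr (fun i => (S i).map φ.toEmbedding) r E := by
  obtain ⟨hinj, hne, hiff⟩ := hS
  refine ⟨fun i j hij => hinj (Finset.map_injective _ hij), fun i => (hne i).map,
    fun e he => (hiff e he).trans ?_⟩
  simp only [Finset.mem_map_equiv]
  exact (φ.symm.forall_congr_right).symm

end Kneser

section IndependentSets

variable {ι : Type*} [DecidableEq ι] {E : Set (Multiset ι)}

def IsIndependent (E : Set (Multiset ι)) (A : Finset ι) : Prop :=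
  ∀ e ∈ E, ¬ e.toFinset ⊆ A

theorem IsIndependent.mono {A B : Finset ι} (hB : IsIndependent E B) (hAB : A ⊆ B) :
    IsIndependent E A :=
  fun e he hA => hB e he (hA.trans hAB)

theorem isIndependent_singleton (hloop : ∀ e ∈ E, ∃ a ∈ e, ∃ b ∈ e, a ≠ b) (i : ι) :
    IsIndependent E {i} := by
  intro e he hsub
  obtain ⟨a, ha, b, hb, hab⟩ := hloop e he
  have ha' := Finset.mem_singleton.1 (hsub (mem_toFinset.2 ha))
  have hb' := Finset.mem_singleton.1 (hsub (mem_toFinset.2 hb))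
  exact hab (ha'.trans hb'.symm)

theorem IsUpMonotone.mem_iff_not_isIndependent {r : ℕ} (hE : IsUpMonotone r E)
    (hloop : ∀ e ∈ E, ∃ a ∈ e, ∃ b ∈ e, a ≠ b) {e : Multiset ι} (he : card e = r) :
    e ∈ E ↔ ¬ IsIndependent E e.toFinset := by
  refine ⟨fun heE hind => hind e heE subset_rfl, fun hdep => ?_⟩
  obtain ⟨e₀, he₀, hsub⟩ : ∃ e₀ ∈ E, e₀.toFinset ⊆ e.toFinset := by
    simpa [IsIndependent] using hdep
  obtain ⟨a, ha, b, hb, hab⟩ := hloop e₀ he₀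
  exact hE e₀ he₀ e he ⟨a, mem_toFinset.1 (hsub (mem_toFinset.2 ha)),
    b, mem_toFinset.1 (hsub (mem_toFinset.2 hb)), hab⟩ hsub

variable [Fintype ι]

open Classical in
noncomputable def independentCover (E : Set (Multiset ι)) (i : ι) : Finset (Finset ι) :=
  {A | i ∈ A ∧ IsIndependent E A}

theorem mem_independentCover {i : ι} {A : Finset ι} :
    A ∈ independentCover E i ↔ i ∈ A ∧ IsIndependent E A := by
  simp [independentCover]

theorem exists_forall_mem_independentCover_iff {e : Multiset ι} (he : e ≠ 0) :
    (∃ A, ∀ i ∈ e, A ∈ independentCover E i) ↔ IsIndependent E e.toFinset := by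
  simp only [mem_independentCover]
  constructor
  · rintro ⟨A, hA⟩
    obtain ⟨i, hi⟩ := exists_mem_of_ne_zero he
    exact (hA i hi).2.mono fun j hj => (hA j (mem_toFinset.1 hj)).1
  · exact fun hind => ⟨e.toFinset, fun i hi => ⟨mem_toFinset.2 hi, hind⟩⟩

theorem isKneserRepr_independentCover {r : ℕ} (hr : r ≠ 0)
    (hloop : ∀ e ∈ E, ∃ a ∈ e, ∃ b ∈ e, a ≠ b) (hE : IsUpMonotone r E) :
    IsKneserRepr (independentCover E) r E := by
  have hsingleton (i : ι) : {i} ∈ independentCover E i :=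
    mem_independentCover.2 ⟨Finset.mem_singleton_self i, isIndependent_singleton hloop i⟩
  refine ⟨fun i j hij => ?_, fun i => ⟨_, hsingleton i⟩, fun e he => ?_⟩
  · have := (mem_independentCover.1 (hij ▸ hsingleton i)).1
    exact (Finset.mem_singleton.1 this).symm
  · have he0 : e ≠ 0 := card_pos.1 (he ▸ Nat.pos_of_ne_zero hr)
    rw [kneser_condition_iff hr he, hE.mem_iff_not_isIndependent hloop he,
      ← exists_forall_mem_independentCover_iff he0]
    push Not
    rfl

end IndependentSets

/-- An `r`-uniform hypergraph with multiplicities `H = ([n], E)` (loop-free) can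
be represented as `KG^r_{r-1}(S)` for some family `S` of nonempty sets — i.e.
there is an injection `i ↦ Sᵢ` such that the edges of `H` are exactly the
`(r-1,…,r-1)`-disjoint `r`-multisets (no ground element occurring, with
multiplicity, in all `r` of the chosen sets) — if and only if `H` is up-monotone. -/
theorem stmt8 {n r : ℕ} (hr : 2 ≤ r) (E : Set (Multiset (Fin n)))
    (hcard : ∀ e ∈ E, Multiset.card e = r)
    (hloop : ∀ e ∈ E, ∃ a ∈ e, ∃ b ∈ e, a ≠ b) :
    (∃ (m : ℕ) (S : Fin n → Finset (Fin m)), Function.Injective S ∧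
      (∀ i, (S i).Nonempty) ∧
      ∀ e : Multiset (Fin n), Multiset.card e = r →
        (e ∈ E ↔ ∀ x : Fin m, e.countP (fun i => x ∈ S i) ≤ r - 1)) ↔
    (∀ e ∈ E, ∀ e' : Multiset (Fin n), Multiset.card e' = r →
      (∃ a ∈ e', ∃ b ∈ e', a ≠ b) → e.toFinset ⊆ e'.toFinset → e' ∈ E) := by
  have hr0 : r ≠ 0 := by omega
  constructor
  · rintro ⟨m, S, hS⟩
    exact IsKneserRepr.isUpMonotone hS hr0 hcard
  · intro hE
    exact ⟨_, _, (isKneserRepr_independentCover hr0 hloop hE).map_equiv (Fintype.equivFin _)⟩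
end

section
/- The 3-uniform hypergraph with multiplicities on vertex set [3] whose only edges are the multisets {{1,1,3}} and {{2,2,3}} cannot be represented as a generalized Kneser hypergraph KG^3_s(S) for any family S = {S_1,S_2,S_3} and any intersection multiplicities s: if both {{S_1,S_1,S_3}} and {{S_2,S_2,S_3}} are s-disjoint, then so is {{S_1,S_2,S_3}}. -/
/-!
Counting an element `i` in `{{A, B, C}}` gives `[i ∈ A] + [i ∈ B] + [i ∈ C]`, and
`x + y ≤ max (2 x) (2 y)`; so the count is bounded by the larger of the counts in
`{{A, A, C}}` and `{{B, B, C}}`, and `s`-disjointness of both forces that of `{{A, B, C}}`.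
Hence any representation declaring `{{S₁,S₁,S₃}}` and `{{S₂,S₂,S₃}}` to be edges also has
the edge `{{S₁,S₂,S₃}}`.
-/

def sDisj (m : ℕ) (s : Fin m → ℕ) (e : Multiset (Finset (Fin m))) : Prop :=
  ∀ i : Fin m, e.countP (fun T => i ∈ T) ≤ s i

theorem Multiset.countP_cons_cons_le_max {α : Type*} (p : α → Prop) [DecidablePred p]
    (a b : α) (e : Multiset α) :
    (a ::ₘ b ::ₘ e).countP p ≤ max ((a ::ₘ a ::ₘ e).countP p) ((b ::ₘ b ::ₘ e).countP p) := by
  simp only [Multiset.countP_cons]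
  split_ifs <;> omega

theorem sDisj.cons_cons_of_doubled {m : ℕ} {s : Fin m → ℕ} {a b : Finset (Fin m)}
    {e : Multiset (Finset (Fin m))} (ha : sDisj m s (a ::ₘ a ::ₘ e))
    (hb : sDisj m s (b ::ₘ b ::ₘ e)) : sDisj m s (a ::ₘ b ::ₘ e) := fun i =>
  (Multiset.countP_cons_cons_le_max _ a b e).trans (max_le (ha i) (hb i))

/-- `[3]` is `Fin 3`, so the edges `{{1,1,3}}` and `{{2,2,3}}` are `{0,0,2}` and `{1,1,2}`. -/
theorem stmt10 :
    (∀ (m : ℕ) (s : Fin m → ℕ) (S : Fin 3 → Finset (Fin m)),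
      sDisj m s {S 0, S 0, S 2} → sDisj m s {S 1, S 1, S 2} →
      sDisj m s {S 0, S 1, S 2}) ∧
    ¬ ∃ (m : ℕ) (s : Fin m → ℕ) (S : Fin 3 → Finset (Fin m)),
      Function.Injective S ∧
      ∀ e : Multiset (Fin 3), Multiset.card e = 3 →
        (∃ a ∈ e, ∃ b ∈ e, a ≠ b) →
        (sDisj m s (e.map S) ↔
          e ∈ ({({0, 0, 2} : Multiset (Fin 3)), ({1, 1, 2} : Multiset (Fin 3))} :
            Set (Multiset (Fin 3)))) := by
  have mixed : ∀ (m : ℕ) (s : Fin m → ℕ) (S : Fin 3 → Finset (Fin m)),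
      sDisj m s {S 0, S 0, S 2} → sDisj m s {S 1, S 1, S 2} →
      sDisj m s {S 0, S 1, S 2} := fun _ _ _ => sDisj.cons_cons_of_doubled
  refine ⟨mixed, ?_⟩
  rintro ⟨m, s, S, -, hS⟩
  have edge₀ := (hS {0, 0, 2} rfl ⟨0, by decide, 2, by decide, by decide⟩).mpr (Or.inl rfl)
  have edge₁ := (hS {1, 1, 2} rfl ⟨1, by decide, 2, by decide, by decide⟩).mpr (Or.inr rfl)
  have hmixed := (hS {0, 1, 2} rfl ⟨0, by decide, 2, by decide, by decide⟩).mp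
    (mixed m s S edge₀ edge₁)
  revert hmixed
  decide
end

section
/- Let n ≥ 5, r ≥ 9, n ≥ r−1, and S := {{1,2},{1,3},…,{1,n},{2,3},{4,5}} ⊆ binom([n],2). Then the chromatic number of the multiplicity-free Kneser hypergraph kg^r_{r-2}(S) equals 2: every edge of kg^r_{r-2}(S) contains both the vertex {2,3} and the vertex {4,5}. -/
/-- The family `S = {{1,2},{1,3},…,{1,n},{2,3},{4,5}}` of 2-subsets of `[n]`. -/
def Sfam (n : ℕ) : Finset (Finset ℕ) :=
  ((Finset.Icc 2 n).image fun j => ({1, j} : Finset ℕ)) ∪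
    {({2, 3} : Finset ℕ), ({4, 5} : Finset ℕ)}

/-- An edge of the multiplicity-free Kneser hypergraph `kg^r_s(S)`:
an `r`-set of distinct members of `S` in which each ground element occurs
in at most `s` of the sets. -/
def kgEdge (r s : ℕ) (S : Finset (Finset ℕ)) (e : Finset (Finset ℕ)) : Prop :=
  e.card = r ∧ e ⊆ S ∧ ∀ i : ℕ, (e.filter fun T => i ∈ T).card ≤ s

/-- The chromatic number of `kg^r_s(S)`. -/
noncomputable def chromkg (r s : ℕ) (S : Finset (Finset ℕ)) : ℕ :=
  sInf {m | ∃ c : Finset ℕ → Fin m,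
    ∀ e, kgEdge r s S e → ∃ A ∈ e, ∃ B ∈ e, c A ≠ c B}

/-! Every member of `Sfam n` other than `{2,3}` and `{4,5}` contains `1`, so an edge of
`kg^r_{r-2}(Sfam n)`, having `r` members of which at most `r - 2` contain `1`, must contain both
`{2,3}` and `{4,5}`. Colouring `{2,3}` apart from everything else is therefore proper, and one
colour is not enough because `{1,2}, …, {1,r-1}, {2,3}, {4,5}` is an edge. -/

open Finset

theorem pair_injOn_Ioi (a : ℕ) : Set.InjOn (fun j => ({a, j} : Finset ℕ)) (Set.Ioi a) := by
  intro j hj k hk hjk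
  have : j ∈ ({a, k} : Finset ℕ) := by
    rw [← show ({a, j} : Finset ℕ) = {a, k} from hjk]
    exact mem_insert_of_mem (mem_singleton_self j)
  simp only [Set.mem_Ioi] at hj
  simp only [mem_insert, mem_singleton] at this
  omega

theorem one_mem_of_mem_Sfam {n : ℕ} {T : Finset ℕ} (hT : T ∈ Sfam n)
    (h23 : T ≠ {2, 3}) (h45 : T ≠ {4, 5}) : 1 ∈ T := by
  simp only [Sfam, mem_union, mem_image, mem_insert, mem_singleton] at hT
  rcases hT with ⟨j, -, rfl⟩ | rfl | rfl
  exacts [mem_insert_self 1 {j}, absurd rfl h23, absurd rfl h45]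

theorem mem_of_card_filter_add_two_le {α : Type*} [DecidableEq α] {e : Finset α}
    {p : α → Prop} [DecidablePred p] {a b : α} (hp : #(e.filter p) + 2 ≤ #e)
    (hab : ∀ x ∈ e, ¬p x → x = a ∨ x = b) : a ∈ e ∧ b ∈ e := by
  have hsub : e.filter (fun x => ¬p x) ⊆ {a, b} := fun x hx => by
    rw [mem_filter] at hx
    simpa using hab x hx.1 hx.2
  have hcard : #({a, b} : Finset α) ≤ #(e.filter fun x => ¬p x) := by
    have := card_filter_add_card_filter_not (s := e) p
    have := card_le_two (a := a) (b := b)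
    omega
  have heq := eq_of_subset_of_card_le hsub hcard
  have hmem : ∀ x ∈ ({a, b} : Finset α), x ∈ e := fun x hx =>
    (mem_filter.1 (heq ▸ hx)).1
  exact ⟨hmem a (by simp), hmem b (by simp)⟩

theorem mem_of_kgEdge_Sfam {n r : ℕ} (hr : 2 ≤ r) {e : Finset (Finset ℕ)}
    (he : kgEdge r (r - 2) (Sfam n) e) : ({2, 3} : Finset ℕ) ∈ e ∧ ({4, 5} : Finset ℕ) ∈ e := by
  obtain ⟨hcard, hsub, hmul⟩ := he
  refine mem_of_card_filter_add_two_le (p := fun T => 1 ∈ T) (by have := hmul 1; omega) ?_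
  intro T hT h1
  by_contra! h
  exact h1 (one_mem_of_mem_Sfam (hsub hT) h.1 h.2)

def starOne (r : ℕ) : Finset (Finset ℕ) :=
  (Icc 2 (r - 1)).image fun j => {1, j}

def starEdge (r : ℕ) : Finset (Finset ℕ) :=
  starOne r ∪ {{2, 3}, {4, 5}}

theorem card_starOne (r : ℕ) : #(starOne r) = r - 2 := by
  rw [starOne, card_image_of_injOn, Nat.card_Icc]
  · omega
  · exact (pair_injOn_Ioi 1).mono fun j hj => by simp at hj ⊢; omega

theorem filter_one_mem_starEdge (r : ℕ) : (starEdge r).filter (fun T => 1 ∈ T) = starOne r := by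
  rw [starEdge, filter_union, filter_true_of_mem, filter_false_of_mem, union_empty]
  · simp
  · simp only [starOne, mem_image]
    rintro _ ⟨j, -, rfl⟩
    exact mem_insert_self 1 {j}

theorem filter_one_not_mem_starEdge (r : ℕ) :
    (starEdge r).filter (fun T => 1 ∉ T) = {{2, 3}, {4, 5}} := by
  rw [starEdge, filter_union, filter_false_of_mem, filter_true_of_mem, empty_union]
  · simp
  · simp only [starOne, mem_image, not_not]
    rintro _ ⟨j, -, rfl⟩
    exact mem_insert_self 1 {j}

theorem card_starEdge {r : ℕ} (hr : 2 ≤ r) : #(starEdge r) = r := by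
  rw [← card_filter_add_card_filter_not (fun T => 1 ∈ T), filter_one_mem_starEdge,
    filter_one_not_mem_starEdge, card_starOne, card_pair (by decide)]
  omega

theorem filter_mem_starEdge_subset (r : ℕ) {i : ℕ} (hi : i ≠ 1) :
    (starEdge r).filter (fun T => i ∈ T) ⊆ {{1, i}, {2, 3}, {4, 5}} := by
  intro T hT
  simp only [starEdge, starOne, mem_filter, mem_union, mem_image, mem_insert, mem_singleton] at hT ⊢
  obtain ⟨⟨j, -, rfl⟩ | rfl | rfl, hiT⟩ := hT
  · simp only [mem_insert, mem_singleton] at hiT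
    rcases hiT with rfl | rfl
    exacts [absurd rfl hi, Or.inl rfl]
  all_goals simp

theorem starEdge_subset_Sfam {n r : ℕ} (hnr : r - 1 ≤ n) : starEdge r ⊆ Sfam n :=
  union_subset_union (image_subset_image (Icc_subset_Icc le_rfl hnr)) subset_rfl

theorem kgEdge_starEdge {n r : ℕ} (hr : 5 ≤ r) (hnr : r - 1 ≤ n) :
    kgEdge r (r - 2) (Sfam n) (starEdge r) := by
  refine ⟨card_starEdge (by omega), starEdge_subset_Sfam hnr, fun i => ?_⟩
  obtain rfl | hi := eq_or_ne i 1
  · rw [filter_one_mem_starEdge, card_starOne]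
  · have := (card_le_card (filter_mem_starEdge_subset r hi)).trans card_le_three
    omega

theorem chromkg_eq_two {r s : ℕ} {S : Finset (Finset ℕ)} {A B : Finset ℕ} (hAB : A ≠ B)
    (hmem : ∀ e, kgEdge r s S e → A ∈ e ∧ B ∈ e) (hedge : ∃ e, kgEdge r s S e) :
    chromkg r s S = 2 := by
  classical
  have htwo : 2 ∈ {m | ∃ c : Finset ℕ → Fin m,
      ∀ e, kgEdge r s S e → ∃ A ∈ e, ∃ B ∈ e, c A ≠ c B} := by
    refine ⟨fun T => if T = A then 0 else 1, fun e he => ?_⟩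
    exact ⟨A, (hmem e he).1, B, (hmem e he).2, by simp [hAB.symm]⟩
  refine le_antisymm (Nat.sInf_le htwo) (le_csInf ⟨2, htwo⟩ ?_)
  rintro m ⟨c, hc⟩
  obtain ⟨e, he⟩ := hedge
  obtain ⟨A', -, B', -, hne⟩ := hc e he
  by_contra! hm
  have : Subsingleton (Fin m) := Fin.subsingleton_iff_le_one.2 (by omega)
  exact hne (Subsingleton.elim _ _)

theorem stmt11_general (n r : ℕ) (hr : 9 ≤ r) (hnr : r - 1 ≤ n) :
    (∀ e, kgEdge r (r - 2) (Sfam n) e →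
      ({2, 3} : Finset ℕ) ∈ e ∧ ({4, 5} : Finset ℕ) ∈ e) ∧
    chromkg r (r - 2) (Sfam n) = 2 :=
  ⟨fun _ => mem_of_kgEdge_Sfam (by omega),
    chromkg_eq_two (by decide) (fun _ => mem_of_kgEdge_Sfam (by omega))
      ⟨_, kgEdge_starEdge (by omega) hnr⟩⟩

/-- For `n ≥ 5`, `r ≥ 9`, `n ≥ r-1` and `S = {{1,2},…,{1,n},{2,3},{4,5}}`,
every edge of `kg^r_{r-2}(S)` contains both `{2,3}` and `{4,5}`, and
`χ(kg^r_{r-2}(S)) = 2`. -/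
theorem stmt11 (n r : ℕ) (hn : 5 ≤ n) (hr : 9 ≤ r) (hnr : r - 1 ≤ n) :
    (∀ e, kgEdge r (r - 2) (Sfam n) e →
      ({2, 3} : Finset ℕ) ∈ e ∧ ({4, 5} : Finset ℕ) ∈ e) ∧
    chromkg r (r - 2) (Sfam n) = 2 :=
  stmt11_general n r hr hnr
end

section
/- For n ≥ 5, r ≥ 4 with n ≥ r−1, and S := {{1,2},{1,3},…,{1,n},{2,3},{4,5}}, the (r−2,…,r−2)-disjoint r-colorability defect satisfies cd^r_{r-2}(S) = 3r − 10. -/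
/-- The `(s,…,s)`-disjoint `r`-colorability defect of a family `S` of subsets
of `[n] = {1,…,n}`: `n·s` minus the maximal total size of `r` subsets of `[n]`,
each element lying in at most `s` of them, none containing a member of `S`. -/
noncomputable def cdN (n r s : ℕ) (S : Finset (Finset ℕ)) : ℕ :=
  n * s - sSup {m | ∃ R : Multiset (Finset ℕ),
    Multiset.card R = r ∧
    (∀ A ∈ R, A ⊆ Finset.Icc 1 n) ∧
    (∀ i : ℕ, R.countP (fun A => i ∈ A) ≤ s) ∧
    (∀ A ∈ R, ∀ T ∈ S, ¬ T ⊆ A) ∧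
    m = (R.map Finset.card).sum}

/-
Each admissible set meets `{1,…,5}` in at most two points, since any three of them contain one
of the pairs `{1,j}`, `{2,3}`, `{4,5}`; and each point of `{6,…,n}` lies in at most `r-2` of the
sets. So the total size is at most `2r + (n-5)(r-2)`. Two copies of `{3,5}` together with `r-2`
copies of `{2,…,n} \ {3,5}` attain this bound, and the defect is `5(r-2) - 2r = 3r - 10`.
-/

open Finset

theorem Multiset.countP_replicate {α : Type*} (p : α → Prop) [DecidablePred p] (k : ℕ) (a : α) :
    (Multiset.replicate k a).countP p = if p a then k else 0 := by
  split_ifs with h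
  · rw [Multiset.countP_eq_card.mpr fun b hb => Multiset.eq_of_mem_replicate hb ▸ h,
      Multiset.card_replicate]
  · exact Multiset.countP_eq_zero.mpr fun b hb => Multiset.eq_of_mem_replicate hb ▸ h

theorem Multiset.sum_map_card_inter {α : Type*} [DecidableEq α] (R : Multiset (Finset α))
    (s : Finset α) : (R.map fun A => #(A ∩ s)).sum = ∑ i ∈ s, R.countP (i ∈ ·) := by
  induction R using Multiset.induction with
  | empty => simp
  | cons A R ih =>
    simp only [Multiset.map_cons, Multiset.sum_cons, ih, Multiset.countP_cons,
      Finset.sum_add_distrib, Finset.sum_boole, Nat.cast_id, Finset.inter_comm A,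
      filter_mem_eq_inter]
    exact Nat.add_comm _ _

theorem Multiset.sum_map_card_le {α : Type*} [DecidableEq α] {R : Multiset (Finset α)}
    {u t : Finset α} {k s : ℕ} (hu : ∀ A ∈ R, A ⊆ u) (ht : ∀ A ∈ R, #(A ∩ t) ≤ k)
    (hs : ∀ i, R.countP (i ∈ ·) ≤ s) :
    (R.map Finset.card).sum ≤ k * Multiset.card R + #(u \ t) * s := by
  have hsplit : ∀ A ∈ R, #A = #(A ∩ t) + #(A ∩ (u \ t)) := fun A hA => by
    rw [← card_inter_add_card_sdiff A t, ← inter_sdiff_assoc, inter_eq_left.mpr (hu A hA)]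
  calc (R.map Finset.card).sum
      = (R.map fun A => #(A ∩ t)).sum + (R.map fun A => #(A ∩ (u \ t))).sum := by
        rw [Multiset.map_congr rfl hsplit, Multiset.sum_map_add]
    _ ≤ (R.map fun _ => k).sum + ∑ _i ∈ u \ t, s := by
        rw [Multiset.sum_map_card_inter R (u \ t)]
        exact add_le_add (Multiset.sum_map_le_sum_map _ _ ht) (Finset.sum_le_sum fun i _ => hs i)
    _ = k * Multiset.card R + #(u \ t) * s := by simp [mul_comm]

theorem cdN_eq_of_exists_of_forall_le {n r s M : ℕ} {S : Finset (Finset ℕ)}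
    (R₀ : Multiset (Finset ℕ))
    (hR₀ : Multiset.card R₀ = r ∧ (∀ A ∈ R₀, A ⊆ Icc 1 n) ∧ (∀ i, R₀.countP (i ∈ ·) ≤ s) ∧
      (∀ A ∈ R₀, ∀ T ∈ S, ¬ T ⊆ A) ∧ (R₀.map card).sum = M)
    (hle : ∀ R : Multiset (Finset ℕ), Multiset.card R = r → (∀ A ∈ R, A ⊆ Icc 1 n) →
      (∀ i, R.countP (i ∈ ·) ≤ s) → (∀ A ∈ R, ∀ T ∈ S, ¬ T ⊆ A) → (R.map card).sum ≤ M) :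
    cdN n r s S = n * s - M := by
  obtain ⟨h₁, h₂, h₃, h₄, h₅⟩ := hR₀
  rw [cdN]
  congr 1
  refine IsGreatest.csSup_eq ⟨⟨R₀, h₁, h₂, h₃, h₄, h₅.symm⟩, ?_⟩
  rintro m ⟨R, hR₁, hR₂, hR₃, hR₄, rfl⟩
  exact hle R hR₁ hR₂ hR₃ hR₄

theorem not_subset_of_mem_Sfam {n : ℕ} {A T : Finset ℕ} (h₁ : 1 ∉ A) (h₂₃ : 2 ∉ A ∨ 3 ∉ A)
    (h₄₅ : 4 ∉ A ∨ 5 ∉ A) (hT : T ∈ Sfam n) : ¬ T ⊆ A := by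
  simp only [Sfam, mem_union, mem_image, mem_insert, mem_singleton] at hT
  rcases hT with ⟨j, -, rfl⟩ | rfl | rfl <;> simp only [insert_subset_iff, singleton_subset_iff]
  <;> tauto

theorem card_inter_Icc_one_five_le {n : ℕ} (hn : 5 ≤ n) {A : Finset ℕ}
    (hA : ∀ T ∈ Sfam n, ¬ T ⊆ A) : #(A ∩ Icc 1 5) ≤ 2 := by
  have hpair : ∀ T ∈ Sfam n, T ⊆ Icc 1 5 → ¬ T ⊆ A ∩ Icc 1 5 := fun T hT _ h =>
    hA T hT (h.trans inter_subset_left)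
  have hmem : ∀ j ∈ Icc 2 5, ({1, j} : Finset ℕ) ∈ Sfam n := fun j hj =>
    mem_union_left _ (mem_image_of_mem _ (Icc_subset_Icc_right hn hj))
  have key : ∀ B ∈ (Icc 1 5).powerset, {1, 2} ⊆ B ∨ {1, 3} ⊆ B ∨ {1, 4} ⊆ B ∨ {1, 5} ⊆ B ∨
      {2, 3} ⊆ B ∨ {4, 5} ⊆ B ∨ #B ≤ 2 := by decide
  rcases key _ (mem_powerset.mpr inter_subset_right) with h | h | h | h | h | h | h
  · exact absurd h (hpair _ (hmem 2 (by decide)) (by decide))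
  · exact absurd h (hpair _ (hmem 3 (by decide)) (by decide))
  · exact absurd h (hpair _ (hmem 4 (by decide)) (by decide))
  · exact absurd h (hpair _ (hmem 5 (by decide)) (by decide))
  · exact absurd h (hpair _ (mem_union_right _ (by simp)) (by decide))
  · exact absurd h (hpair _ (mem_union_right _ (by simp)) (by decide))
  · exact h

def extremalColoring (n r : ℕ) : Multiset (Finset ℕ) :=
  Multiset.replicate 2 {3, 5} + Multiset.replicate (r - 2) (Icc 2 n \ {3, 5})

theorem card_extremalColoring {n r : ℕ} (hr : 2 ≤ r) :
    Multiset.card (extremalColoring n r) = r := by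
  simp only [extremalColoring, Multiset.card_add, Multiset.card_replicate]
  omega

theorem subset_Icc_of_mem_extremalColoring {n r : ℕ} (hn : 5 ≤ n) :
    ∀ A ∈ extremalColoring n r, A ⊆ Icc 1 n := by
  intro A hA
  rcases Multiset.mem_add.mp hA with h | h <;> rw [Multiset.eq_of_mem_replicate h] <;>
    intro x hx <;> simp only [mem_insert, mem_singleton, mem_sdiff, mem_Icc] at hx ⊢ <;> omega

theorem countP_extremalColoring_le {n r : ℕ} (hr : 4 ≤ r) (i : ℕ) :
    (extremalColoring n r).countP (i ∈ ·) ≤ r - 2 := by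
  simp only [extremalColoring, Multiset.countP_add, Multiset.countP_replicate, mem_insert,
    mem_singleton, mem_sdiff]
  split_ifs <;> omega

theorem not_subset_of_mem_extremalColoring {n r : ℕ} :
    ∀ A ∈ extremalColoring n r, ∀ T ∈ Sfam n, ¬ T ⊆ A := by
  intro A hA T hT
  rcases Multiset.mem_add.mp hA with h | h <;> rw [Multiset.eq_of_mem_replicate h]
  · exact not_subset_of_mem_Sfam (by decide) (by simp) (by simp) hT
  · exact not_subset_of_mem_Sfam (by simp) (by simp) (by simp) hT

theorem sum_card_extremalColoring {n r : ℕ} (hn : 5 ≤ n) (hr : 2 ≤ r) :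
    ((extremalColoring n r).map Finset.card).sum = 2 * r + (n - 5) * (r - 2) := by
  have hsub : ({3, 5} : Finset ℕ) ⊆ Icc 2 n := by
    intro x hx; simp only [mem_insert, mem_singleton, mem_Icc] at hx ⊢; omega
  simp only [extremalColoring, Multiset.map_add, Multiset.map_replicate, Multiset.sum_add,
    Multiset.sum_replicate, card_sdiff_of_subset hsub, Nat.card_Icc, smul_eq_mul,
    card_pair (by decide : 3 ≠ 5), show n + 1 - 2 - 2 = (n - 5) + 2 by omega]
  rw [mul_add, mul_comm (r - 2)]
  omega

theorem stmt12_general (n r : ℕ) (hn : 5 ≤ n) (hr : 4 ≤ r) :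
    cdN n r (r - 2) (Sfam n) = 3 * r - 10 := by
  rw [cdN_eq_of_exists_of_forall_le (M := 2 * r + (n - 5) * (r - 2)) (extremalColoring n r)
    ⟨card_extremalColoring (by omega), subset_Icc_of_mem_extremalColoring hn,
      countP_extremalColoring_le hr, not_subset_of_mem_extremalColoring,
      sum_card_extremalColoring hn (by omega)⟩ fun R hcard hsub hcount hfree => ?_]
  · have : n * (r - 2) = (n - 5) * (r - 2) + 5 * (r - 2) := by
      rw [← add_mul, Nat.sub_add_cancel hn]
    omega
  · calc (R.map Finset.card).sum
        ≤ 2 * Multiset.card R + #(Icc 1 n \ Icc 1 5) * (r - 2) :=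
          Multiset.sum_map_card_le hsub (fun A hA => card_inter_Icc_one_five_le hn (hfree A hA))
            hcount
      _ = 2 * r + (n - 5) * (r - 2) := by
          rw [card_sdiff_of_subset (Icc_subset_Icc_right hn), Nat.card_Icc, Nat.card_Icc, hcard,
            show n + 1 - 1 - (5 + 1 - 1) = n - 5 by omega]

/-- For `n ≥ 5`, `r ≥ 4`, `n ≥ r-1` and `S = {{1,2},…,{1,n},{2,3},{4,5}}`,
the `(r-2,…,r-2)`-disjoint `r`-colorability defect is `cd^r_{r-2}(S) = 3r - 10`. -/
theorem stmt12 (n r : ℕ) (hn : 5 ≤ n) (hr : 4 ≤ r) (hnr : r - 1 ≤ n) :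
    cdN n r (r - 2) (Sfam n) = 3 * r - 10 :=
  stmt12_general n r hn hr
end

section
/- For n, r ≥ 4 with r ≤ C(n,2), the map c: binom([n],2) → [n−2] given by c(S) = min(min S, n−2) is a proper coloring of the Kneser hypergraph without multiplicities kg^r_{r-1}(binom([n],2)); hence χ(kg^r_{r-1}(binom([n],2))) ≤ n−2. -/
/-- The family of all 2-subsets of `[n] = {1,…,n}`. -/
def pairs (n : ℕ) : Finset (Finset ℕ) := (Finset.Icc 1 n).powersetCard 2

open Finset

noncomputable def pairColor (n : ℕ) (A : Finset ℕ) : ℕ := min (sInf (A : Set ℕ)) (n - 2)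

section Kneser

variable {r s : ℕ} {S e : Finset (Finset ℕ)}

theorem kgEdge.le_card_of_subset {T : Finset (Finset ℕ)} (he : kgEdge r s S e) (h : e ⊆ T) :
    r ≤ #T :=
  he.1 ▸ card_le_card h

theorem kgEdge.not_forall_mem (he : kgEdge r s S e) (hs : s < r) (i : ℕ) :
    ¬ ∀ A ∈ e, i ∈ A := fun h => by
  have := he.2.2 i
  rw [filter_true_of_mem h, he.1] at this
  omega

theorem chromkg_le_of_coloring {m : ℕ} (c : Finset ℕ → Fin m)
    (hc : ∀ e, kgEdge r s S e → ∃ A ∈ e, ∃ B ∈ e, c A ≠ c B) : chromkg r s S ≤ m :=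
  Nat.sInf_le ⟨c, hc⟩

end Kneser

section pairColor

variable {n : ℕ} {A : Finset ℕ}

theorem sInf_mem_of_mem_pairs (hA : A ∈ pairs n) : sInf (A : Set ℕ) ∈ A := by
  rw [pairs, mem_powersetCard] at hA
  exact Nat.sInf_mem (coe_nonempty.2 (card_pos.1 (by omega)))

theorem mem_Icc_of_mem_pairs {x : ℕ} (hA : A ∈ pairs n) (hx : x ∈ A) : x ∈ Icc 1 n :=
  (mem_powersetCard.1 hA).1 hx

theorem pairColor_le (n : ℕ) (A : Finset ℕ) : pairColor n A ≤ n - 2 :=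
  min_le_right _ _

theorem one_le_pairColor (hn : 3 ≤ n) (hA : A ∈ pairs n) : 1 ≤ pairColor n A := by
  have := (mem_Icc.1 (mem_Icc_of_mem_pairs hA (sInf_mem_of_mem_pairs hA))).1
  unfold pairColor
  omega

theorem pairColor_mem (hA : A ∈ pairs n) (h : pairColor n A < n - 2) : pairColor n A ∈ A := by
  have : pairColor n A = sInf (A : Set ℕ) := by unfold pairColor at *; omega
  exact this ▸ sInf_mem_of_mem_pairs hA

theorem mem_top_pairs_of_pairColor_eq (hA : A ∈ pairs n) (h : pairColor n A = n - 2) :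
    A ∈ (Icc (n - 2) n).powersetCard 2 := by
  refine mem_powersetCard.2 ⟨fun x hx => ?_, (mem_powersetCard.1 hA).2⟩
  have hle : sInf (A : Set ℕ) ≤ x := Nat.sInf_le hx
  have hxn := (mem_Icc.1 (mem_Icc_of_mem_pairs hA hx)).2
  unfold pairColor at h
  exact mem_Icc.2 ⟨by omega, hxn⟩

theorem card_top_pairs_le (n : ℕ) : #((Icc (n - 2) n).powersetCard 2) ≤ 3 := by
  rw [card_powersetCard, Nat.card_Icc]
  rcases le_or_gt n 1 with h | h
  · interval_cases n <;> decide
  · rw [show n + 1 - (n - 2) = 3 by omega]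
    rfl

/-- Each colour class below `n - 2` is a star, and the top class lives inside the triangle on
`{n - 2, n - 1, n}`, which has only three edges; neither contains `r ≥ 4` pairs with every
point of degree at most `r - 1`. -/
theorem exists_pairColor_ne_of_kgEdge {r : ℕ} {e : Finset (Finset ℕ)} (hr : 4 ≤ r)
    (he : kgEdge r (r - 1) (pairs n) e) : ∃ A ∈ e, ∃ B ∈ e, pairColor n A ≠ pairColor n B := by
  by_contra! hconst
  obtain ⟨A₀, hA₀⟩ := card_pos.1 (he.1 ▸ (by omega : 0 < r))
  rcases (pairColor_le n A₀).lt_or_eq with hlt | heq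
  · refine he.not_forall_mem (by omega) (pairColor n A₀) fun A hA => ?_
    rw [hconst A₀ hA₀ A hA] at hlt ⊢
    exact pairColor_mem (he.2.1 hA) hlt
  · have hsub : e ⊆ (Icc (n - 2) n).powersetCard 2 := fun A hA =>
      mem_top_pairs_of_pairColor_eq (he.2.1 hA) (hconst A hA A₀ hA₀ ▸ heq)
    have := (he.le_card_of_subset hsub).trans (card_top_pairs_le n)
    omega

end pairColor

theorem stmt14_general (n r : ℕ) (hn : 4 ≤ n) (hr : 4 ≤ r) :
    (∀ e, kgEdge r (r - 1) (pairs n) e →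
      ∃ A ∈ e, ∃ B ∈ e,
        min (sInf (A : Set ℕ)) (n - 2) ≠ min (sInf (B : Set ℕ)) (n - 2)) ∧
    chromkg r (r - 1) (pairs n) ≤ n - 2 := by
  refine ⟨fun e he => exists_pairColor_ne_of_kgEdge hr he, ?_⟩
  -- Shift the colours `1, …, n - 2` down to `Fin (n - 2)`.
  refine chromkg_le_of_coloring
    (fun A => ⟨pairColor n A - 1, by have := pairColor_le n A; omega⟩) fun e he => ?_
  obtain ⟨A, hA, B, hB, hAB⟩ := exists_pairColor_ne_of_kgEdge hr he
  have := one_le_pairColor (by omega) (he.2.1 hA)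
  have := one_le_pairColor (by omega) (he.2.1 hB)
  exact ⟨A, hA, B, hB, fun h => hAB (by simp only [Fin.mk.injEq] at h; omega)⟩

/-- For `n, r ≥ 4` with `r ≤ C(n,2)`, the map `c(S) = min(min S, n-2)` is a
proper coloring of `kg^r_{r-1}(binom([n],2))` with `n-2` colors; hence
`χ(kg^r_{r-1}(binom([n],2))) ≤ n - 2`. -/
theorem stmt14 (n r : ℕ) (hn : 4 ≤ n) (hr : 4 ≤ r) (hrc : r ≤ n.choose 2) :
    (∀ e, kgEdge r (r - 1) (pairs n) e →
      ∃ A ∈ e, ∃ B ∈ e,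
        min (sInf (A : Set ℕ)) (n - 2) ≠ min (sInf (B : Set ℕ)) (n - 2)) ∧
    chromkg r (r - 1) (pairs n) ≤ n - 2 :=
  stmt14_general n r hn hr
end

section
/- For n large, χ(kg^r_{r-1}(binom([n],2))) = n − ⌊r/2⌋ is strictly smaller than χ(KG^r_{r-1}(binom([n],2))) = n − 1 whenever r ≥ 4; hence the chromatic numbers of generalized Kneser hypergraphs with and without multiplicities can differ by an arbitrarily large amount (⌊r/2⌋ − 1) as r grows. -/
/-- An edge of the Kneser hypergraph with multiplicities `KG^r_s(S)`. -/
def KGEdge (r s : ℕ) (S : Finset (Finset ℕ)) (e : Multiset (Finset ℕ)) : Prop :=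
  Multiset.card e = r ∧ (∀ A ∈ e, A ∈ S) ∧
    ∀ i : ℕ, e.countP (fun T => i ∈ T) ≤ s

/-- The chromatic number of `KG^r_s(S)`. -/
noncomputable def chromKG (r s : ℕ) (S : Finset (Finset ℕ)) : ℕ :=
  sInf {m | ∃ c : Finset ℕ → Fin m,
    ∀ e, KGEdge r s S e → ∃ A ∈ e, ∃ B ∈ e, c A ≠ c B}

/-!
A colour class of `KG^r_{r-1}` containing no edge is a star: if `{a, b}` is in the class and so are
`B ∌ a` and `C ∌ b`, then `(r - 2)·{a, b} + B + C` is a monochromatic edge. With fewer than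
`n - 1` colours, two vertices are the centre of no class, and the pair they span cannot be coloured;
colouring each pair by its minimum shows that `n - 1` colours suffice.

Without multiplicities only the classes with at least `r` pairs are forced to be stars (a swap
argument). If `b` classes are stars and `s` are small, the `n - b` vertices that are not centres
span `binom(n - b, 2) ≤ s (r - 1)` pairs, which forces `b + s ≥ n - ⌊r/2⌋`. Conversely, with
`k = ⌊r/2⌋`, take `n + 1 - 2k` stars and colour the pairs among the remaining `2k - 1` vertices by
their cyclic distance: this gives `k - 1` further classes of `2k - 1 < r` pairs each.
-/

open Finset

section TwoSets

variable {α : Type*} [DecidableEq α]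

lemma eq_pair_of_card_eq_two {P : Finset α} {v w : α} (hP : #P = 2) (hv : v ∈ P) (hw : w ∈ P)
    (hvw : v ≠ w) : P = {v, w} :=
  (eq_of_subset_of_card_le (by simp [insert_subset_iff, hv, hw]) (by rw [hP, card_pair hvw])).symm

lemma exists_multiset_countP_le_of_not_star {F : Finset (Finset α)} {r : ℕ} (hr : 3 ≤ r)
    (hF : ∀ P ∈ F, #P = 2) (hne : F.Nonempty) (hstar : ∀ v, ∃ P ∈ F, v ∉ P) :
    ∃ e : Multiset (Finset α), Multiset.card e = r ∧ (∀ P ∈ e, P ∈ F) ∧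
      ∀ i, e.countP (i ∈ ·) ≤ r - 1 := by
  obtain ⟨A, hA⟩ := hne
  obtain ⟨a, b, -, rfl⟩ := card_eq_two.mp (hF A hA)
  obtain ⟨B, hB, haB⟩ := hstar a
  obtain ⟨C, hC, hbC⟩ := hstar b
  refine ⟨(r - 2) • {{a, b}} + {B, C}, ?_, ?_, fun i => ?_⟩
  · simp only [Multiset.card_add, Multiset.card_nsmul, Multiset.insert_eq_cons,
      Multiset.card_cons, Multiset.card_singleton]
    omega
  · simp only [Multiset.mem_add, Multiset.insert_eq_cons, Multiset.mem_cons,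
      Multiset.mem_singleton]
    rintro P (hP | hP | hP)
    · rwa [Multiset.mem_singleton.mp (Multiset.mem_of_mem_nsmul hP)]
    all_goals (subst hP; assumption)
  · simp only [Multiset.countP_add, Multiset.countP_nsmul, Multiset.insert_eq_cons,
      ← Multiset.cons_zero, Multiset.countP_cons, Multiset.countP_zero, zero_add]
    have hnot_all : ¬ (i ∈ ({a, b} : Finset α) ∧ i ∈ B ∧ i ∈ C) := by
      rintro ⟨hab, hiB, hiC⟩
      rcases mem_insert.mp hab with rfl | hib
      exacts [haB hiB, hbC (mem_singleton.mp hib ▸ hiC)]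
    split_ifs <;> simp_all <;> omega


/-- If `e₀ ⊆ F` has common vertex `v` and `P ∈ F` misses `v`, swapping a member of `e₀` for `P`
gives a subfamily whose common vertex `w` would force all other members of `e₀` to be `{v, w}`. -/
lemma exists_subset_card_eq_of_not_star {F : Finset (Finset α)} {r : ℕ} (hr : 3 ≤ r)
    (hF : ∀ P ∈ F, #P = 2) (hcard : r ≤ #F) (hstar : ∀ v, ∃ P ∈ F, v ∉ P) :
    ∃ e ⊆ F, #e = r ∧ ∀ v, ∃ P ∈ e, v ∉ P := by
  by_contra! hsub
  obtain ⟨e₀, he₀F, he₀⟩ := exists_subset_card_eq hcard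
  obtain ⟨v, hv⟩ := hsub e₀ he₀F he₀
  obtain ⟨P, hPF, hvP⟩ := hstar v
  have hPe₀ : P ∉ e₀ := fun h => hvP (hv P h)
  obtain ⟨Q, hQ⟩ : e₀.Nonempty := card_pos.mp (by omega)
  have hrest : #(e₀.erase Q) = r - 1 := by rw [card_erase_of_mem hQ, he₀]
  obtain ⟨w, hw⟩ := hsub (insert P (e₀.erase Q))
    (insert_subset hPF ((erase_subset _ _).trans he₀F))
    (by rw [card_insert_of_notMem (fun h => hPe₀ (mem_of_mem_erase h)), hrest]; omega)
  have hvw : v ≠ w := fun h => hvP (h ▸ hw P (mem_insert_self _ _))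
  have hpair : ∀ Q' ∈ e₀.erase Q, Q' = {v, w} := fun Q' hQ' =>
    eq_pair_of_card_eq_two (hF Q' (he₀F (mem_of_mem_erase hQ'))) (hv Q' (mem_of_mem_erase hQ'))
      (hw Q' (mem_insert_of_mem hQ')) hvw
  obtain ⟨Q₁, hQ₁, Q₂, hQ₂, hne⟩ := one_lt_card.mp (show 1 < #(e₀.erase Q) by omega)
  exact hne ((hpair Q₁ hQ₁).trans (hpair Q₂ hQ₂).symm)

/-- `b` counts the classes with at least `t` pairs, which are stars, and `s` the others; the
vertices that are not centres of stars span only pairs of the small classes. -/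
lemma exists_choose_two_le_of_star {ι : Type*} [Fintype ι] [DecidableEq ι] (V : Finset α)
    (c : Finset α → ι) (t : ℕ)
    (hstar : ∀ j, t ≤ #{P ∈ V.powersetCard 2 | c P = j} →
      ∃ v, ∀ P ∈ V.powersetCard 2, c P = j → v ∈ P) :
    ∃ b s, b + s = Fintype.card ι ∧ (#V - b).choose 2 ≤ s * (t - 1) := by
  set large : Finset ι := {j | t ≤ #{P ∈ V.powersetCard 2 | c P = j}}
  choose v hv using fun j : large => hstar j (mem_filter.mp j.2).2
  set W := V \ univ.image v
  refine ⟨#large, #largeᶜ, card_add_card_compl large, ?_⟩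
  have hW : W.powersetCard 2 ⊆ largeᶜ.biUnion fun j => {P ∈ V.powersetCard 2 | c P = j} := by
    intro P hP
    have hPV : P ∈ V.powersetCard 2 := powersetCard_mono sdiff_subset hP
    refine mem_biUnion.mpr ⟨c P, mem_compl.mpr fun hlarge => ?_, mem_filter.mpr ⟨hPV, rfl⟩⟩
    have hvW := (mem_powersetCard.mp hP).1 (hv ⟨c P, hlarge⟩ P hPV rfl)
    exact (mem_sdiff.mp hvW).2 (mem_image_of_mem v (mem_univ _))
  calc (#V - #large).choose 2
      ≤ (#W).choose 2 := Nat.choose_le_choose 2 <|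
        (Nat.sub_le_sub_left (card_image_le.trans_eq (by simp)) _).trans (le_card_sdiff _ _)
    _ = #(W.powersetCard 2) := (card_powersetCard 2 W).symm
    _ ≤ ∑ j ∈ largeᶜ, #{P ∈ V.powersetCard 2 | c P = j} := (card_le_card hW).trans card_biUnion_le
    _ ≤ #largeᶜ * (t - 1) := sum_le_card_nsmul _ _ _ fun j hj => by
        have : ¬ t ≤ _ := fun h => mem_compl.mp hj (mem_filter.mpr ⟨mem_univ j, h⟩)
        omega

end TwoSets

def IsProperColoring {γ β : Type*} [Membership γ β] (E : β → Prop) {m : ℕ} (c : γ → Fin m) :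
    Prop :=
  ∀ e, E e → ∃ A ∈ e, ∃ B ∈ e, c A ≠ c B

lemma exists_isProperColoring {γ β : Type*} [Membership γ β] {E : β → Prop} {S : Set γ}
    {m : ℕ} (hm : 0 < m) (hES : ∀ e, E e → ∀ A ∈ e, A ∈ S) (f : γ → ℕ) (hf : ∀ A ∈ S, f A < m)
    (hproper : ∀ e, E e → ∃ A ∈ e, ∃ B ∈ e, f A ≠ f B) :
    ∃ c : γ → Fin m, IsProperColoring E c := by
  refine ⟨fun A => ⟨min (f A) (m - 1), by omega⟩, fun e he => ?_⟩
  obtain ⟨A, hA, B, hB, hAB⟩ := hproper e he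
  have hfA := hf A (hES e he A hA)
  have hfB := hf B (hES e he B hB)
  refine ⟨A, hA, B, hB, fun h => hAB ?_⟩
  have hval : min (f A) (m - 1) = min (f B) (m - 1) := congrArg Fin.val h
  omega

def pairColoring {α : Type*} [LinearOrder α] (g : α → α → ℕ) (A : Finset α) : ℕ :=
  if h : A.Nonempty then g (A.min' h) (A.max' h) else 0

lemma pairColoring_pair {α : Type*} [LinearOrder α] (g : α → α → ℕ) {a b : α} (hab : a < b) :
    pairColoring g {a, b} = g a b := by
  simp [pairColoring, min_eq_left hab.le, max_eq_right hab.le]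

lemma exists_eq_pair_of_mem_pairs {n : ℕ} {A : Finset ℕ} (hA : A ∈ pairs n) :
    ∃ a b, 1 ≤ a ∧ a < b ∧ b ≤ n ∧ A = {a, b} := by
  obtain ⟨hsub, hcard⟩ := mem_powersetCard.mp hA
  obtain ⟨a, b, hab, rfl⟩ := card_eq_two.mp hcard
  have ha := mem_Icc.mp (hsub (mem_insert_self a {b}))
  have hb := mem_Icc.mp (hsub (mem_insert_of_mem (mem_singleton_self b)))
  rcases hab.lt_or_gt with h | h
  · exact ⟨a, b, ha.1, h, hb.2, rfl⟩
  · exact ⟨b, a, hb.1, h, ha.2, pair_comm a b⟩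

lemma colorable_KG_pairs {n r : ℕ} (hr : 1 ≤ r) (hn : 2 ≤ n) :
    ∃ c : Finset ℕ → Fin (n - 1), IsProperColoring (KGEdge r (r - 1) (pairs n)) c := by
  refine exists_isProperColoring (by omega) (fun e he => he.2.1) (pairColoring fun a _ => a - 1)
    (fun A hA => ?_) fun e ⟨hcard, hS, hcount⟩ => ?_
  · obtain ⟨a, b, ha, hab, hb, rfl⟩ := exists_eq_pair_of_mem_pairs hA
    rw [pairColoring_pair _ hab]
    omega
  by_contra! hsame
  obtain ⟨A₀, hA₀⟩ := Multiset.card_pos_iff_exists_mem.mp (show 0 < Multiset.card e by omega)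
  obtain ⟨a₀, b₀, ha₀, hab₀, -, rfl⟩ := exists_eq_pair_of_mem_pairs (hS A₀ hA₀)
  have hall : ∀ A ∈ e, a₀ ∈ A := fun A hA => by
    obtain ⟨a, b, ha, hab, -, rfl⟩ := exists_eq_pair_of_mem_pairs (hS A hA)
    have := hsame _ hA _ hA₀
    rw [pairColoring_pair _ hab, pairColoring_pair _ hab₀] at this
    simp [show a = a₀ by omega]
  have := hcount a₀
  rw [Multiset.countP_eq_card.mpr hall] at this
  omega

/-- Each pair at difference `d` or `q - d` inside `[L, L + q)` is `{x, x + d mod q}` for one of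
its endpoints `x`. -/
lemma card_le_of_forall_sub_eq {e : Finset (Finset ℕ)} {L q d : ℕ}
    (he : ∀ A ∈ e, ∃ a b, L ≤ a ∧ a < b ∧ b < L + q ∧ A = {a, b} ∧ (b - a = d ∨ b - a = q - d)) :
    #e ≤ q := by
  let partner (x : ℕ) : ℕ := if x + d < L + q then x + d else x + d - q
  have hsub : e ⊆ (Ico L (L + q)).image fun x => {x, partner x} := by
    intro A hA
    obtain ⟨a, b, hLa, hab, hb, rfl, hd | hd⟩ := he A hA
    · refine mem_image.mpr ⟨a, mem_Ico.mpr ⟨hLa, by omega⟩, ?_⟩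
      simp only [partner, if_pos (show a + d < L + q by omega), show a + d = b by omega]
    · refine mem_image.mpr ⟨b, mem_Ico.mpr ⟨by omega, hb⟩, ?_⟩
      simp only [partner, if_neg (show ¬ b + d < L + q by omega), show b + d - q = a by omega]
      exact pair_comm b a
  calc #e ≤ #((Ico L (L + q)).image fun x => {x, partner x}) := card_le_card hsub
    _ ≤ q := card_image_le.trans (by simp)

/-- Vertex `a < L` gives the star colour `a - 1` to the pairs with minimum `a`; the pairs inside
the `q` vertices `L, …, L + q - 1` are coloured by their distance on the cycle `ℤ/q`. -/
def starCycleColor (L q a b : ℕ) : ℕ :=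
  if a < L then a - 1 else L - 1 + (min (b - a) (q - (b - a)) - 1)

lemma starCycleColor_eq {L q a b a₀ b₀ : ℕ} (ha : 1 ≤ a) (hab : a < b) (hb : b < L + q)
    (ha₀ : 1 ≤ a₀) (hab₀ : a₀ < b₀) (hb₀ : b₀ < L + q)
    (h : starCycleColor L q a b = starCycleColor L q a₀ b₀) :
    (a₀ < L → a = a₀) ∧ (L ≤ a₀ → L ≤ a ∧ (b - a = b₀ - a₀ ∨ b - a = q - (b₀ - a₀))) := by
  unfold starCycleColor at h
  split_ifs at h <;> omega

lemma colorable_kg_pairs {n r : ℕ} (hr : 4 ≤ r) (hn : r ≤ n) :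
    ∃ c : Finset ℕ → Fin (n - r / 2), IsProperColoring (kgEdge r (r - 1) (pairs n)) c := by
  set k := r / 2
  set q := 2 * k - 1
  set L := n + 1 - q
  refine exists_isProperColoring (by omega) (fun e he => he.2.1)
    (pairColoring (starCycleColor L q)) (fun A hA => ?_) fun e ⟨hcard, hS, hcount⟩ => ?_
  · obtain ⟨a, b, ha, hab, hb, rfl⟩ := exists_eq_pair_of_mem_pairs hA
    rw [pairColoring_pair _ hab]
    unfold starCycleColor
    split_ifs <;> omega
  by_contra! hsame
  obtain ⟨A₀, hA₀⟩ := card_pos.mp (show 0 < #e by omega)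
  obtain ⟨a₀, b₀, ha₀, hab₀, hb₀, rfl⟩ := exists_eq_pair_of_mem_pairs (hS hA₀)
  have hclass : ∀ A ∈ e, ∃ a b, a < b ∧ b < L + q ∧ A = {a, b} ∧
      (a₀ < L → a = a₀) ∧ (L ≤ a₀ → L ≤ a ∧ (b - a = b₀ - a₀ ∨ b - a = q - (b₀ - a₀))) := by
    intro A hA
    obtain ⟨a, b, ha, hab, hb, rfl⟩ := exists_eq_pair_of_mem_pairs (hS hA)
    have := hsame _ hA _ hA₀
    rw [pairColoring_pair _ hab, pairColoring_pair _ hab₀] at this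
    exact ⟨a, b, hab, by omega, rfl, starCycleColor_eq ha hab (by omega) ha₀ hab₀ (by omega) this⟩
  by_cases hstar : a₀ < L
  · have hall : ∀ A ∈ e, a₀ ∈ A := fun A hA => by
      obtain ⟨a, b, -, -, rfl, ha, -⟩ := hclass A hA
      simp [ha hstar]
    have := hcount a₀
    rw [filter_true_of_mem hall] at this
    omega
  · have := card_le_of_forall_sub_eq (L := L) (q := q) (d := b₀ - a₀) fun A hA => by
      obtain ⟨a, b, hab, hb, hA, -, h⟩ := hclass A hA
      exact ⟨a, b, (h (by omega)).1, hab, hb, hA, (h (by omega)).2⟩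
    omega

lemma mul_lt_choose_two {s k t : ℕ} (hk : 1 ≤ k) (ht : s + k + 1 ≤ t) :
    s * (2 * k) < t.choose 2 := by
  have hmain : s * (2 * k) < (s + k + 1).choose 2 := by
    rw [Nat.choose_two_right, Nat.add_sub_cancel]
    exact (Nat.le_div_iff_mul_le two_pos).mpr (by nlinarith [sq_nonneg ((s : ℤ) - k)])
  exact hmain.trans_le (Nat.choose_le_choose 2 ht)

lemma le_of_isProperColoring_KG_pairs {n r m : ℕ} (hr : 3 ≤ r) {c : Finset ℕ → Fin m}
    (hc : IsProperColoring (KGEdge r (r - 1) (pairs n)) c) : n - 1 ≤ m := by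
  obtain ⟨b, s, hbs, hchoose⟩ := exists_choose_two_le_of_star (Icc 1 n) c 1 fun j hj => by
    by_contra! hns
    obtain ⟨e, hcard, heF, hcount⟩ := exists_multiset_countP_le_of_not_star
      (F := {P ∈ pairs n | c P = j}) hr (fun P hP => (mem_powersetCard.mp (mem_filter.mp hP).1).2)
      (card_pos.mp hj) fun v => by
        obtain ⟨P, hP, hPj, hvP⟩ := hns v
        exact ⟨P, mem_filter.mpr ⟨hP, hPj⟩, hvP⟩
    obtain ⟨A, hA, B, hB, hAB⟩ :=
      hc e ⟨hcard, fun P hP => (mem_filter.mp (heF P hP)).1, hcount⟩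
    exact hAB (((mem_filter.mp (heF A hA)).2).trans (mem_filter.mp (heF B hB)).2.symm)
  rw [Nat.mul_zero, Nat.le_zero, Nat.choose_eq_zero_iff, Nat.card_Icc] at hchoose
  simp only [Fintype.card_fin] at hbs
  omega

lemma le_of_isProperColoring_kg_pairs {n r m : ℕ} (hr : 3 ≤ r) {c : Finset ℕ → Fin m}
    (hc : IsProperColoring (kgEdge r (r - 1) (pairs n)) c) : n - r / 2 ≤ m := by
  obtain ⟨b, s, hbs, hchoose⟩ := exists_choose_two_le_of_star (Icc 1 n) c r fun j hj => by
    by_contra! hns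
    obtain ⟨e, heF, hcard, hmiss⟩ := exists_subset_card_eq_of_not_star
      (F := {P ∈ pairs n | c P = j}) hr (fun P hP => (mem_powersetCard.mp (mem_filter.mp hP).1).2)
      hj fun v => by
        obtain ⟨P, hP, hPj, hvP⟩ := hns v
        exact ⟨P, mem_filter.mpr ⟨hP, hPj⟩, hvP⟩
    have hcount (i : ℕ) : #{P ∈ e | i ∈ P} ≤ r - 1 := by
      have := card_lt_card (filter_ssubset.mpr (hmiss i))
      omega
    obtain ⟨A, hA, B, hB, hAB⟩ :=
      hc e ⟨hcard, fun P hP => (mem_filter.mp (heF hP)).1, hcount⟩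
    exact hAB (((mem_filter.mp (heF hA)).2).trans (mem_filter.mp (heF hB)).2.symm)
  rw [Nat.card_Icc, Nat.add_sub_cancel] at hchoose
  simp only [Fintype.card_fin] at hbs
  by_contra! hm
  have hlt := mul_lt_choose_two (s := s) (k := r / 2) (t := n - b) (by omega) (by omega)
  have hle := Nat.mul_le_mul_left s (show r - 1 ≤ 2 * (r / 2) by omega)
  omega

/-- For `4 ≤ r ≤ n`, `χ(kg^r_{r-1}(binom([n],2))) = n - ⌊r/2⌋` is strictly
smaller than `χ(KG^r_{r-1}(binom([n],2))) = n - 1`; the difference is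
`⌊r/2⌋ - 1`, which is arbitrarily large as `r` grows. -/
theorem stmt19 (n r : ℕ) (hr : 4 ≤ r) (hn : r ≤ n) :
    chromkg r (r - 1) (pairs n) = n - r / 2 ∧
    chromKG r (r - 1) (pairs n) = n - 1 ∧
    chromkg r (r - 1) (pairs n) < chromKG r (r - 1) (pairs n) ∧
    chromKG r (r - 1) (pairs n) - chromkg r (r - 1) (pairs n) = r / 2 - 1 := by
  have hkg : chromkg r (r - 1) (pairs n) = n - r / 2 :=
    IsLeast.csInf_eq ⟨colorable_kg_pairs hr hn,
      fun _ ⟨_, hc⟩ => le_of_isProperColoring_kg_pairs (by omega) hc⟩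
  have hKG : chromKG r (r - 1) (pairs n) = n - 1 :=
    IsLeast.csInf_eq ⟨colorable_KG_pairs (by omega) (by omega),
      fun _ ⟨_, hc⟩ => le_of_isProperColoring_KG_pairs (by omega) hc⟩
  refine ⟨hkg, hKG, ?_, ?_⟩ <;> rw [hkg, hKG] <;> omega
end
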